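/- Let r = p·d, fix q ∈ ℂ with q ≠ 0, ξ := exp(2π√−1/p), x_0 := 1, and nonzero x_1, …, x_{d−1} ∈ ℂ, and define Q_{c·p+m} := x_c ξ^m for 0 ≤ c ≤ d−1 and 0 ≤ m ≤ p−1. Let Γ := {λ ∈ P_{n,r} : for all μ ∈ P_{n,r}, λ ∼_R μ implies μ = λ}. Then Γ is stable under the shifts: if λ ∈ Γ then λ[i] ∈ Γ for every i ∈ ℤ. -/

import Mathlib

noncomputable section

/-- An `r`-multipartition of `n`, encoded as a function `la : ℕ → ℕ → ℕ`, where
`la k i` is the `(i+1)`-st part of the `(k+1)`-st component `λ^{(k+1)}`: each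
component is weakly decreasing, the parts vanish from index `n` on, the components
with index `≥ r` vanish, and the total size is `n`. -/
def IsMultipartition (n r : ℕ) (la : ℕ → ℕ → ℕ) : Prop :=
  (∀ k, Antitone (la k)) ∧ (∀ k i, n ≤ i → la k i = 0) ∧
    (∀ k, r ≤ k → ∀ i, la k i = 0) ∧
    (∑ k ∈ Finset.range r, ∑ i ∈ Finset.range n, la k i) = n

/-- The index map underlying the shift `λ ↦ λ[i]`: the component with (0-based) index
`t = c·p + j` (`0 ≤ j < p`) of `λ[i]` is the component of `λ` with index
`c·p + ((j + i) mod p)`. -/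
def shiftIdx (p : ℕ) (i : ℤ) (t : ℕ) : ℕ :=
  p * (t / p) + ((((t % p : ℕ) : ℤ) + i) % (p : ℤ)).toNat

/-- `shift p i la` is `λ[i]`, cyclically shifting the `p` components within each block
of `p` consecutive components by `i`. -/
def shift (p : ℕ) (i : ℤ) (la : ℕ → ℕ → ℕ) : ℕ → ℕ → ℕ :=
  fun t => la (shiftIdx p i t)

/-- `𝔨_λ`: the minimal positive integer `m` with `λ[m] = λ`. -/
def kOf (p : ℕ) (la : ℕ → ℕ → ℕ) : ℕ :=
  sInf {m : ℕ | 0 < m ∧ shift p (m : ℤ) la = la}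

open Classical in
/-- The residue of the (0-based) cell in row `i`, column `j` of the `(k+1)`-st component,
with respect to the parameters `q` and `Q_0, …, Q_{r-1}`; it takes values in
`ℂ ⊔ (ℤ × ℂ)`. -/
def res (q : ℂ) (Q : ℕ → ℂ) (r : ℕ) (i j k : ℕ) : ℂ ⊕ (ℤ × ℂ) :=
  if q ≠ 1 ∧ Q k ≠ 0 then Sum.inl (q ^ ((j : ℤ) - (i : ℤ)) * Q k)
  else if q = 1 ∧ (∀ l < r, l ≠ k → Q l ≠ Q k) then Sum.inr ((j : ℤ) - (i : ℤ), Q k)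
  else Sum.inl (Q k)

/-- The number of cells of the diagram of `λ` whose residue is `a`.  A cell is a triple
`(k, i, j)` with `k < r`, `i < n` and `j < λ^{(k+1)}_{i+1}` (all 0-based). -/
def resCount (q : ℂ) (Q : ℕ → ℂ) (r n : ℕ) (la : ℕ → ℕ → ℕ) (a : ℂ ⊕ (ℤ × ℂ)) : ℕ :=
  Nat.card {c : ℕ × ℕ × ℕ // c.1 < r ∧ c.2.1 < n ∧ c.2.2 < la c.1 c.2.1 ∧
    res q Q r c.2.1 c.2.2 c.1 = a}

/-- The residue equivalence `λ ∼_R μ`: for every residue value the numbers of cells of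
`λ` and of `μ` with that residue agree. -/
def ResEquiv (q : ℂ) (Q : ℕ → ℂ) (r n : ℕ) (la mu : ℕ → ℕ → ℕ) : Prop :=
  ∀ a : ℂ ⊕ (ℤ × ℂ), resCount q Q r n la a = resCount q Q r n mu a

end


/-!
Write `ξ = exp(2π√-1/p)`. Since `ξ^p = 1`, the shift `λ ↦ λ[i]` is induced by a permutation
`σ` of the component indices with `Q_{σ(t)} = ξ^i Q_t`. Every residue is homogeneous of degree
one in `Q` (and the collision condition in the `q = 1` case is invariant under scaling), so
`σ` turns residues `a` into `ξ^i a`. Hence `λ[i] ∼_R μ` iff `λ ∼_R μ[-i]`, and uniqueness in the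
residue class of `λ` transfers to `λ[i]`.
-/

lemma Int.toNat_emod_lt {p : ℕ} (hp : 0 < p) (z : ℤ) : (z % (p : ℤ)).toNat < p := by
  have := Int.emod_nonneg z (Int.natCast_pos.mpr hp).ne'
  have := Int.emod_lt_of_pos z (Int.natCast_pos.mpr hp)
  omega

lemma zpow_emod_of_pow_eq_one {G₀ : Type*} [GroupWithZero G₀] {ξ : G₀} {p : ℕ}
    (hξ : ξ ^ p = 1) (z : ℤ) : ξ ^ (z % (p : ℤ)) = ξ ^ z := by
  rcases p.eq_zero_or_pos with rfl | hp
  · simp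
  conv_rhs => rw [← Int.emod_add_mul_ediv z p]
  rw [zpow_add₀ (IsUnit.of_pow_eq_one hξ hp.ne').ne_zero, zpow_mul, zpow_natCast, hξ, one_zpow,
    mul_one]

section ShiftIdx

variable {p : ℕ} (hp : 0 < p)
include hp

lemma shiftIdx_div (i : ℤ) (t : ℕ) : shiftIdx p i t / p = t / p := by
  rw [shiftIdx, Nat.mul_add_div hp, Nat.div_eq_of_lt (Int.toNat_emod_lt hp _), add_zero]

lemma shiftIdx_mod (i : ℤ) (t : ℕ) :
    ((shiftIdx p i t % p : ℕ) : ℤ) = ((t % p : ℕ) + i) % (p : ℤ) := by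
  rw [shiftIdx, Nat.mul_add_mod, Nat.mod_eq_of_lt (Int.toNat_emod_lt hp _),
    Int.toNat_of_nonneg (Int.emod_nonneg _ (Int.natCast_pos.mpr hp).ne')]

lemma shiftIdx_shiftIdx (i j : ℤ) (t : ℕ) :
    shiftIdx p j (shiftIdx p i t) = shiftIdx p (i + j) t := by
  rw [shiftIdx, shiftIdx_div hp, shiftIdx_mod hp, Int.emod_add_emod, add_assoc, shiftIdx]

lemma shiftIdx_zero (t : ℕ) : shiftIdx p 0 t = t := by
  have hlt : ((t % p : ℕ) : ℤ) < p := by exact_mod_cast Nat.mod_lt t hp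
  rw [shiftIdx, add_zero, Int.emod_eq_of_lt (Int.natCast_nonneg _) hlt, Int.toNat_natCast,
    Nat.div_add_mod]

lemma shiftIdx_lt_mul_iff (i : ℤ) (t d : ℕ) : shiftIdx p i t < p * d ↔ t < p * d := by
  rw [mul_comm, ← Nat.div_lt_iff_lt_mul hp, ← Nat.div_lt_iff_lt_mul hp, shiftIdx_div hp]

def shiftPerm (i : ℤ) : Equiv.Perm ℕ where
  toFun := shiftIdx p i
  invFun := shiftIdx p (-i)
  left_inv t := by rw [shiftIdx_shiftIdx hp, add_neg_cancel, shiftIdx_zero hp]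
  right_inv t := by rw [shiftIdx_shiftIdx hp, neg_add_cancel, shiftIdx_zero hp]

lemma shift_eq_comp (i : ℤ) (la : ℕ → ℕ → ℕ) : shift p i la = la ∘ shiftPerm hp i := rfl

lemma shift_shift (i j : ℤ) (la : ℕ → ℕ → ℕ) :
    shift p i (shift p j la) = shift p (i + j) la := by
  funext t
  exact congrArg la (shiftIdx_shiftIdx hp i j t)

lemma shift_zero (la : ℕ → ℕ → ℕ) : shift p 0 la = la := by
  funext t
  exact congrArg la (shiftIdx_zero hp t)

lemma param_shiftIdx {d : ℕ} {ξ : ℂ} (hξ : ξ ^ p = 1) {x Q : ℕ → ℂ}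
    (hQ : ∀ c < d, ∀ m < p, Q (c * p + m) = x c * ξ ^ m) (i : ℤ) {t : ℕ} (ht : t < p * d) :
    Q (shiftIdx p i t) = ξ ^ i * Q t := by
  have hc : t / p < d := (Nat.div_lt_iff_lt_mul hp).mpr (by rwa [mul_comm])
  have hshift : shiftIdx p i t = t / p * p + shiftIdx p i t % p := by
    rw [← shiftIdx_div hp i t, Nat.div_add_mod']
  have hpow : ξ ^ (shiftIdx p i t % p) = ξ ^ i * ξ ^ (t % p) := by
    rw [← zpow_natCast, shiftIdx_mod hp, zpow_emod_of_pow_eq_one hξ,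
      zpow_add₀ (IsUnit.of_pow_eq_one hξ hp.ne').ne_zero, zpow_natCast, mul_comm]
  conv_rhs => rw [← Nat.div_add_mod' t p, hQ _ hc _ (Nat.mod_lt _ hp)]
  rw [hshift, hQ _ hc _ (Nat.mod_lt _ hp), hpow]
  ring

end ShiftIdx

def scaleRes (ζ : ℂ) : ℂ ⊕ (ℤ × ℂ) → ℂ ⊕ (ℤ × ℂ) :=
  Sum.map (ζ * ·) (Prod.map id (ζ * ·))

lemma scaleRes_injective {ζ : ℂ} (hζ : ζ ≠ 0) : Function.Injective (scaleRes ζ) :=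
  (mul_right_injective₀ hζ).sumMap (Function.injective_id.prodMap (mul_right_injective₀ hζ))

structure IsParamScaling (Q : ℕ → ℂ) (r : ℕ) (σ : Equiv.Perm ℕ) (ζ : ℂ) : Prop where
  lt_iff : ∀ t, σ t < r ↔ t < r
  ne_zero : ζ ≠ 0
  apply_eq : ∀ t < r, Q (σ t) = ζ * Q t

namespace IsParamScaling

variable {q : ℂ} {Q : ℕ → ℂ} {r n : ℕ} {σ : Equiv.Perm ℕ} {ζ : ℂ}

lemma param_eq_iff (hσ : IsParamScaling Q r σ ζ) {s t : ℕ} (hs : s < r) (ht : t < r) :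
    Q (σ s) = Q (σ t) ↔ Q s = Q t := by
  rw [hσ.apply_eq s hs, hσ.apply_eq t ht, mul_right_inj' hσ.ne_zero]

lemma forall_param_ne_iff (hσ : IsParamScaling Q r σ ζ) {t : ℕ} (ht : t < r) :
    (∀ l < r, l ≠ σ t → Q l ≠ Q (σ t)) ↔ ∀ l < r, l ≠ t → Q l ≠ Q t := by
  refine (σ.forall_congr fun l => ?_).symm
  rw [hσ.lt_iff, σ.injective.ne_iff]
  exact imp_congr_right fun hl => imp_congr_right fun _ => not_congr (hσ.param_eq_iff hl ht).symm

lemma res_apply (hσ : IsParamScaling Q r σ ζ) {t : ℕ} (ht : t < r) (i j : ℕ) :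
    res q Q r i j (σ t) = scaleRes ζ (res q Q r i j t) := by
  simp only [res, hσ.forall_param_ne_iff ht]
  simp only [hσ.apply_eq t ht, ne_eq, mul_eq_zero, hσ.ne_zero, false_or]
  split_ifs <;> simp_all [scaleRes, mul_left_comm]

lemma resCount_comp (hσ : IsParamScaling Q r σ ζ) (la : ℕ → ℕ → ℕ) (a : ℂ ⊕ (ℤ × ℂ)) :
    resCount q Q r n (la ∘ σ) a = resCount q Q r n la (scaleRes ζ a) := by
  refine Nat.card_congr (Equiv.subtypeEquiv (σ.prodCongr (Equiv.refl _)) fun c => ?_)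
  simp only [Equiv.prodCongr_apply, Prod.map_fst, Prod.map_snd, Equiv.coe_refl, id_eq,
    Function.comp_apply, hσ.lt_iff]
  refine and_congr_right fun ht => ?_
  rw [hσ.res_apply ht, (scaleRes_injective hσ.ne_zero).eq_iff]

lemma resEquiv_comp (hσ : IsParamScaling Q r σ ζ) {la mu : ℕ → ℕ → ℕ}
    (h : ResEquiv q Q r n la mu) : ResEquiv q Q r n (la ∘ σ) (mu ∘ σ) := fun a => by
  rw [hσ.resCount_comp, hσ.resCount_comp, h]

end IsParamScaling

lemma IsMultipartition.comp {n r : ℕ} {la : ℕ → ℕ → ℕ} (hla : IsMultipartition n r la)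
    (σ : Equiv.Perm ℕ) (hσ : ∀ t, σ t < r ↔ t < r) : IsMultipartition n r (la ∘ σ) := by
  obtain ⟨hanti, hrow, hcomp, hsize⟩ := hla
  refine ⟨fun k => hanti _, fun k i => hrow _ i, fun k hk => hcomp _ ?_, ?_⟩
  · rwa [← not_lt, hσ, not_lt]
  · refine Eq.trans ?_ hsize
    exact Finset.sum_equiv σ (by simp [hσ]) fun _ _ => rfl

lemma isParamScaling_shiftPerm {p d : ℕ} (hp : 0 < p) {ξ : ℂ} (hξ : ξ ^ p = 1) {x Q : ℕ → ℂ}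
    (hQ : ∀ c < d, ∀ m < p, Q (c * p + m) = x c * ξ ^ m) (i : ℤ) :
    IsParamScaling Q (p * d) (shiftPerm hp i) (ξ ^ i) where
  lt_iff t := shiftIdx_lt_mul_iff hp i t d
  ne_zero := zpow_ne_zero i (IsUnit.of_pow_eq_one hξ hp.ne').ne_zero
  apply_eq _ ht := param_shiftIdx hp hξ hQ i ht

theorem gamma_shift_stable_general
    (n r p d : ℕ) (hp : 0 < p) (hr : r = p * d)
    (q : ℂ)
    (x : ℕ → ℂ)
    (Q : ℕ → ℂ)
    (hQ : ∀ c < d, ∀ m < p,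
      Q (c * p + m) = x c * Complex.exp (2 * Real.pi * Complex.I / p) ^ m)
    (la : ℕ → ℕ → ℕ) (hla : IsMultipartition n r la)
    (hGamma : ∀ mu : ℕ → ℕ → ℕ, IsMultipartition n r mu →
      ResEquiv q Q r n la mu → mu = la)
    (i : ℤ) :
    IsMultipartition n r (shift p i la) ∧
      ∀ mu : ℕ → ℕ → ℕ, IsMultipartition n r mu →
        ResEquiv q Q r n (shift p i la) mu → mu = shift p i la := by
  subst hr
  have hσ := isParamScaling_shiftPerm hp (Complex.isPrimitiveRoot_exp p hp.ne').pow_eq_one hQ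
  refine ⟨hla.comp _ (hσ i).lt_iff, fun mu hmu hres => ?_⟩
  have hres_back := (hσ (-i)).resEquiv_comp hres
  rw [← shift_eq_comp, ← shift_eq_comp, shift_shift hp, neg_add_cancel, shift_zero hp]
    at hres_back
  have hmu_back : shift p (-i) mu = la := hGamma _ (hmu.comp _ (hσ (-i)).lt_iff) hres_back
  rw [← hmu_back, shift_shift hp, add_neg_cancel, shift_zero hp]

/-- with the parameters `q ≠ 0` and `Q_{c·p+m} = x_c ξ^m`
(`ξ = exp(2π√-1/p)`, `x_0 = 1`, `x_1, …, x_{d-1} ≠ 0`), the set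
`Γ = {λ ∈ P_{n,r} : λ ∼_R μ ⟹ μ = λ}` is stable under the shifts `λ ↦ λ[i]`. -/
theorem gamma_shift_stable
    (n r p d : ℕ) (hp : 0 < p) (hd : 0 < d) (hr : r = p * d)
    (q : ℂ) (hq : q ≠ 0)
    (x : ℕ → ℂ) (hx0 : x 0 = 1) (hx : ∀ c, 0 < c → c < d → x c ≠ 0)
    (Q : ℕ → ℂ)
    (hQ : ∀ c < d, ∀ m < p,
      Q (c * p + m) = x c * Complex.exp (2 * Real.pi * Complex.I / p) ^ m)
    (la : ℕ → ℕ → ℕ) (hla : IsMultipartition n r la)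
    (hGamma : ∀ mu : ℕ → ℕ → ℕ, IsMultipartition n r mu →
      ResEquiv q Q r n la mu → mu = la)
    (i : ℤ) :
    IsMultipartition n r (shift p i la) ∧
      ∀ mu : ℕ → ℕ → ℕ, IsMultipartition n r mu →
        ResEquiv q Q r n (shift p i la) mu → mu = shift p i la :=
  gamma_shift_stable_general n r p d hp hr q x Q hQ la hla hGamma i
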